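/- Let f be an irreducible Weierstrass polynomial with Puiseux characteristic (b₀,...,b_g), γ a fixed Newton–Puiseux root of f, and k < g. Then α₃ := Σ O(γ_i, γ) over all roots γ_i with O(γ_i,γ) < b_{k+1}/b₀ equals (n - l₁)(b₁/b₀) + (l₁ - l₂)(b₂/b₀) + ... + (l_{k-1} - l_k)(b_k/b₀), where n = b₀ and l_i = gcd(b₀,...,b_i). -/

import Mathlib

noncomputable section

open Polynomial

/-- The substitution `x^{1/n} ↦ ε·x^{1/n}` on fractional power series: it sends
`Σ a_{i} x^{i/n}` to `Σ a_{i} ε^{i} x^{i/n}` (here the exponent of `ε` at `x^q`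
is the integer `q·n`). -/
def twist (n : ℕ) (ε : ℂ) (γ : HahnSeries ℚ ℂ) : HahnSeries ℚ ℂ where
  coeff q := ε ^ (q * n : ℚ).num * γ.coeff q
  isPWO_support' := γ.isPWO_support.mono (by
    intro q hq
    simp only [Function.mem_support] at hq ⊢
    intro h
    simp [h] at hq)

open scoped Classical

open Finset

lemma twist_coeff (n : ℕ) (ε : ℂ) (γ : HahnSeries ℚ ℂ) (q : ℚ) :
    (twist n ε γ).coeff q = ε ^ (q * n).num * γ.coeff q := rfl

lemma twist_coeff_natCast_div {n : ℕ} (hn : 0 < n) (ε : ℂ) (γ : HahnSeries ℚ ℂ) (i : ℕ) :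
    (twist n ε γ).coeff ((i : ℚ) / n) = ε ^ i * γ.coeff ((i : ℚ) / n) := by
  rw [twist_coeff, div_mul_cancel₀ _ (by positivity), Rat.num_natCast, zpow_natCast]

lemma Nat.dvd_of_le_of_forall_succ_dvd {l : ℕ → ℕ} {g : ℕ} (h : ∀ m < g, l (m + 1) ∣ l m)
    {a c : ℕ} (hac : a ≤ c) (hcg : c ≤ g) : l c ∣ l a := by
  induction c, hac using Nat.le_induction with
  | base => exact dvd_rfl
  | succ c _ ih => exact (h c hcg).trans (ih (by omega))

lemma card_filter_range_dvd_mul {n d : ℕ} (hn : 0 < n) (hd : d ∣ n) :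
    #{j ∈ range n | n ∣ j * d} = d := by
  obtain ⟨e, rfl⟩ := hd
  have he : 0 < e := Nat.pos_of_mul_pos_left hn
  have hfilter : {j ∈ range (d * e) | d * e ∣ j * d} =
      (range d).map ⟨(· * e), mul_left_injective₀ he.ne'⟩ := by
    ext j
    simp only [mem_filter, mem_range, mem_map, Function.Embedding.coeFn_mk]
    rw [mul_comm j, Nat.mul_dvd_mul_iff_left (Nat.pos_of_mul_pos_right hn)]
    constructor
    · rintro ⟨hj, a, rfl⟩
      exact ⟨a, by nlinarith, mul_comm _ _⟩
    · rintro ⟨a, ha, rfl⟩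
      exact ⟨by nlinarith, dvd_mul_left _ _⟩
  rw [hfilter, card_map, card_range]

theorem Finset.sum_sdiff_eq_sum_range_sum_sdiff {α M : Type*} [DecidableEq α] [AddCommGroup M]
    {S : ℕ → Finset α} {k : ℕ} (hS : AntitoneOn S (Set.Iic k)) (f : α → M) :
    ∑ j ∈ S 0 \ S k, f j = ∑ m ∈ range k, ∑ j ∈ S m \ S (m + 1), f j := by
  have hsub : ∀ {a c}, a ≤ c → c ≤ k → S c ⊆ S a := fun hac hck ↦
    hS (Set.mem_Iic.2 (hac.trans hck)) (Set.mem_Iic.2 hck) hac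
  rw [sum_sdiff_eq_sub (hsub k.zero_le le_rfl), ← sum_range_sub' (fun m ↦ ∑ j ∈ S m, f j)]
  exact sum_congr rfl fun m hm ↦ (sum_sdiff_eq_sub (hsub m.le_succ (mem_range.1 hm))).symm

lemma Nat.exists_lt_and_not_succ_of_not {P : ℕ → Prop} {k : ℕ} (h0 : P 0) (hk : ¬ P k) :
    ∃ m < k, P m ∧ ¬ P (m + 1) := by
  induction k with
  | zero => exact absurd h0 hk
  | succ k ih =>
    by_cases hPk : P k
    · exact ⟨k, k.lt_succ_self, hPk, hk⟩
    · obtain ⟨m, hmk, hm⟩ := ih hPk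
      exact ⟨m, hmk.trans k.lt_succ_self, hm⟩

section Twist

variable {n : ℕ} {γ : HahnSeries ℚ ℂ} {ω : ℂ}

lemma twist_pow_sub_coeff_natCast_div_ne_zero_iff (hn : 0 < n) (hω : IsPrimitiveRoot ω n)
    (j i : ℕ) :
    (twist n (ω ^ j) γ - γ).coeff ((i : ℚ) / n) ≠ 0 ↔
      γ.coeff ((i : ℚ) / n) ≠ 0 ∧ ¬ n ∣ j * i := by
  rw [HahnSeries.coeff_sub, twist_coeff_natCast_div hn, ← pow_mul, ← sub_one_mul,
    mul_ne_zero_iff, sub_ne_zero, Ne, hω.pow_eq_one_iff_dvd, and_comm]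

lemma twist_pow_sub_coeff_ne_zero_iff (hsupp : γ.support ⊆ Set.range fun i : ℕ ↦ (i : ℚ) / n)
    (hn : 0 < n) (hω : IsPrimitiveRoot ω n) (j : ℕ) (q : ℚ) :
    (twist n (ω ^ j) γ - γ).coeff q ≠ 0 ↔
      ∃ i : ℕ, q = i / n ∧ γ.coeff ((i : ℚ) / n) ≠ 0 ∧ ¬ n ∣ j * i := by
  constructor
  · intro hq
    have hγq : γ.coeff q ≠ 0 := fun h ↦ hq (by simp [twist_coeff, h])
    obtain ⟨i, rfl⟩ := hsupp hγq
    exact ⟨i, rfl, (twist_pow_sub_coeff_natCast_div_ne_zero_iff hn hω j i).1 hq⟩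
  · rintro ⟨i, rfl, hi⟩
    exact (twist_pow_sub_coeff_natCast_div_ne_zero_iff hn hω j i).2 hi

lemma exists_lt_twist_pow_coeff_ne_iff (hsupp : γ.support ⊆ Set.range fun i : ℕ ↦ (i : ℚ) / n)
    (hn : 0 < n) (hω : IsPrimitiveRoot ω n) (j N : ℕ) :
    (∃ q : ℚ, q < N / n ∧ (twist n (ω ^ j) γ).coeff q ≠ γ.coeff q) ↔
      ∃ i < N, γ.coeff ((i : ℚ) / n) ≠ 0 ∧ ¬ n ∣ j * i := by
  have hlt (i : ℕ) : (i : ℚ) / n < N / n ↔ i < N := by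
    rw [div_lt_div_iff_of_pos_right (by positivity), Nat.cast_lt]
  constructor
  · rintro ⟨q, hq, hne⟩
    obtain ⟨i, rfl, hi⟩ := (twist_pow_sub_coeff_ne_zero_iff hsupp hn hω j q).1 <| by
      rwa [HahnSeries.coeff_sub, sub_ne_zero]
    exact ⟨i, (hlt i).1 hq, hi⟩
  · rintro ⟨i, hiN, hi⟩
    refine ⟨i / n, (hlt i).2 hiN, sub_ne_zero.1 ?_⟩
    rw [← HahnSeries.coeff_sub]
    exact (twist_pow_sub_coeff_natCast_div_ne_zero_iff hn hω j i).2 hi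

lemma order_twist_pow_sub_eq (hsupp : γ.support ⊆ Set.range fun i : ℕ ↦ (i : ℚ) / n)
    (hn : 0 < n) (hω : IsPrimitiveRoot ω n) {j N : ℕ}
    (hbelow : ∀ i < N, γ.coeff ((i : ℚ) / n) ≠ 0 → n ∣ j * i)
    (hN : γ.coeff ((N : ℚ) / n) ≠ 0) (hjN : ¬ n ∣ j * N) :
    (twist n (ω ^ j) γ - γ).order = N / n := by
  have hlead := (twist_pow_sub_coeff_natCast_div_ne_zero_iff hn hω j N).2 ⟨hN, hjN⟩
  refine le_antisymm (HahnSeries.order_le_of_coeff_ne_zero hlead) (not_lt.1 fun hlt ↦ ?_)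
  have hne := mt HahnSeries.coeff_order_eq_zero.1 (HahnSeries.ne_zero_of_coeff_ne_zero hlead)
  obtain ⟨i, hi, hγi, hji⟩ := (twist_pow_sub_coeff_ne_zero_iff hsupp hn hω j _).1 hne
  rw [hi, div_lt_div_iff_of_pos_right (by positivity), Nat.cast_lt] at hlt
  exact hji (hbelow i hlt hγi)

end Twist

structure IsPuiseuxCharacteristic (n g : ℕ) (γ : HahnSeries ℚ ℂ) (b l : ℕ → ℕ) : Prop where
  l_zero : l 0 = n
  l_succ : ∀ m, m < g → l (m + 1) = Nat.gcd (l m) (b (m + 1))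
  b_succ : ∀ m, m < g →
    ({i : ℕ | γ.coeff ((i : ℚ) / n) ≠ 0 ∧ ¬ l m ∣ i}.Nonempty ∧
     b (m + 1) = sInf {i : ℕ | γ.coeff ((i : ℚ) / n) ≠ 0 ∧ ¬ l m ∣ i})

namespace IsPuiseuxCharacteristic

variable {n g : ℕ} {γ : HahnSeries ℚ ℂ} {ω : ℂ} {b l : ℕ → ℕ}

lemma l_dvd_l_of_le (hP : IsPuiseuxCharacteristic n g γ b l) {a c : ℕ} (hac : a ≤ c)
    (hcg : c ≤ g) : l c ∣ l a :=
  Nat.dvd_of_le_of_forall_succ_dvd (fun m hm ↦ (hP.l_succ m hm).symm ▸ Nat.gcd_dvd_left _ _)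
    hac hcg

lemma l_dvd (hP : IsPuiseuxCharacteristic n g γ b l) {m : ℕ} (hm : m ≤ g) : l m ∣ n :=
  hP.l_zero ▸ hP.l_dvd_l_of_le m.zero_le hm

lemma coeff_b_ne_zero_and_not_dvd (hP : IsPuiseuxCharacteristic n g γ b l) {m : ℕ}
    (hm : m < g) : γ.coeff ((b (m + 1) : ℚ) / n) ≠ 0 ∧ ¬ l m ∣ b (m + 1) := by
  obtain ⟨hne, hb⟩ := hP.b_succ m hm
  have hmem := Nat.sInf_mem hne
  rwa [← hb] at hmem

lemma dvd_of_lt_b (hP : IsPuiseuxCharacteristic n g γ b l) {m i : ℕ} (hm : m < g)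
    (hi : i < b (m + 1)) (hγi : γ.coeff ((i : ℚ) / n) ≠ 0) : l m ∣ i := by
  by_contra h
  exact Nat.notMem_of_lt_sInf (hi.trans_eq (hP.b_succ m hm).2) ⟨hγi, h⟩

lemma b_lt_b (hP : IsPuiseuxCharacteristic n g γ b l) {m k : ℕ} (hmk : m < k) (hk : k < g) :
    b (m + 1) < b (k + 1) := by
  obtain ⟨hγk, hk_ndvd⟩ := hP.coeff_b_ne_zero_and_not_dvd hk
  refine lt_of_le_of_ne (not_lt.1 fun hlt ↦ hk_ndvd ?_) fun heq ↦ hk_ndvd ?_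
  · exact (hP.l_dvd_l_of_le hmk.le hk.le).trans (hP.dvd_of_lt_b (hmk.trans hk) hlt hγk)
  · rw [← heq]
    exact (hP.l_dvd_l_of_le hmk hk.le).trans
      ((hP.l_succ m (hmk.trans hk)).symm ▸ Nat.gcd_dvd_right _ _)

lemma not_dvd_mul_b (hP : IsPuiseuxCharacteristic n g γ b l) {m j : ℕ} (hm : m < g)
    (hj : n ∣ j * l m) (hj' : ¬ n ∣ j * l (m + 1)) : ¬ n ∣ j * b (m + 1) := fun hjb ↦ hj' <| by
  rw [hP.l_succ m hm, ← Nat.gcd_mul_left]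
  exact Nat.dvd_gcd hj hjb

lemma order_twist_pow_sub_eq_b (hP : IsPuiseuxCharacteristic n g γ b l)
    (hsupp : γ.support ⊆ Set.range fun i : ℕ ↦ (i : ℚ) / n) (hn : 0 < n)
    (hω : IsPrimitiveRoot ω n) {m j : ℕ} (hm : m < g) (hj : n ∣ j * l m)
    (hj' : ¬ n ∣ j * l (m + 1)) :
    (twist n (ω ^ j) γ - γ).order = b (m + 1) / n :=
  order_twist_pow_sub_eq hsupp hn hω
    (fun _ hi hγi ↦ hj.trans (mul_dvd_mul_left j (hP.dvd_of_lt_b hm hi hγi)))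
    (hP.coeff_b_ne_zero_and_not_dvd hm).1 (hP.not_dvd_mul_b hm hj hj')

lemma filter_exists_lt_twist_pow_coeff_ne (hP : IsPuiseuxCharacteristic n g γ b l)
    (hsupp : γ.support ⊆ Set.range fun i : ℕ ↦ (i : ℚ) / n) (hn : 0 < n)
    (hω : IsPrimitiveRoot ω n) {k : ℕ} (hk : k < g) :
    (range n).filter (fun j ↦
        ∃ q : ℚ, q < (b (k + 1) : ℚ) / n ∧ (twist n (ω ^ j) γ).coeff q ≠ γ.coeff q) =
      (range n).filter (fun j ↦ ¬ n ∣ j * l k) := by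
  refine filter_congr fun j _ ↦ ?_
  rw [exists_lt_twist_pow_coeff_ne_iff hsupp hn hω]
  constructor
  · rintro ⟨i, hi, hγi, hji⟩ hjk
    exact hji (hjk.trans (mul_dvd_mul_left j (hP.dvd_of_lt_b hk hi hγi)))
  · intro hjk
    obtain ⟨m, hmk, hjm, hjm'⟩ := Nat.exists_lt_and_not_succ_of_not
      (P := fun m ↦ n ∣ j * l m) (by simp [hP.l_zero]) hjk
    exact ⟨b (m + 1), hP.b_lt_b hmk hk, (hP.coeff_b_ne_zero_and_not_dvd (hmk.trans hk)).1,
      hP.not_dvd_mul_b (hmk.trans hk) hjm hjm'⟩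

lemma sum_order_twist_pow_sub_filter_not_dvd (hP : IsPuiseuxCharacteristic n g γ b l)
    (hsupp : γ.support ⊆ Set.range fun i : ℕ ↦ (i : ℚ) / n) (hn : 0 < n)
    (hω : IsPrimitiveRoot ω n) {k : ℕ} (hk : k < g) :
    ∑ j ∈ (range n).filter (fun j ↦ ¬ n ∣ j * l k), (twist n (ω ^ j) γ - γ).order =
      ∑ m ∈ range k, ((l m : ℚ) - l (m + 1)) * (b (m + 1) / n) := by
  set S : ℕ → Finset ℕ := fun m ↦ (range n).filter (fun j ↦ n ∣ j * l m) with hS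
  have hS0 : S 0 = range n := filter_true_of_mem fun j _ ↦ hP.l_zero ▸ dvd_mul_left n j
  have hanti : AntitoneOn S (Set.Iic k) := fun a _ c hc hac j hj ↦ by
    rw [hS, mem_filter] at hj ⊢
    exact ⟨hj.1, hj.2.trans (mul_dvd_mul_left j (hP.l_dvd_l_of_le hac (le_trans hc hk.le)))⟩
  rw [show (range n).filter (fun j ↦ ¬ n ∣ j * l k) = S 0 \ S k by rw [hS0, filter_not],
    sum_sdiff_eq_sum_range_sum_sdiff hanti]
  refine sum_congr rfl fun m hm ↦ ?_
  have hmk : m < k := mem_range.1 hm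
  have hlevel : ∀ j ∈ S m \ S (m + 1), (twist n (ω ^ j) γ - γ).order = b (m + 1) / n := by
    intro j hj
    simp only [hS, mem_sdiff, mem_filter] at hj
    exact hP.order_twist_pow_sub_eq_b hsupp hn hω (hmk.trans hk) hj.1.2 (hj.2 ∘ .intro hj.1.1)
  have hl_le : l (m + 1) ≤ l m :=
    Nat.le_of_dvd (Nat.pos_of_dvd_of_pos (hP.l_dvd (by omega)) hn)
      (hP.l_dvd_l_of_le m.le_succ (by omega))
  rw [sum_congr rfl hlevel, sum_const,
    card_sdiff_of_subset (hanti (Set.mem_Iic.2 hmk.le) (Set.mem_Iic.2 hmk) m.le_succ),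
    card_filter_range_dvd_mul hn (hP.l_dvd (by omega)),
    card_filter_range_dvd_mul hn (hP.l_dvd (by omega)), nsmul_eq_mul, Nat.cast_sub hl_le]

end IsPuiseuxCharacteristic

theorem sum_contact_orders_general (n g : ℕ) (hn : 0 < n)
    (γ : HahnSeries ℚ ℂ)
    (hγsupp : γ.support ⊆ {q : ℚ | ∃ i : ℕ, 1 ≤ i ∧ q = (i : ℚ) / n})
    (ω : ℂ) (hω : IsPrimitiveRoot ω n)
    (b l : ℕ → ℕ)
    (hl0 : l 0 = n)
    (hl : ∀ m, m < g → l (m + 1) = Nat.gcd (l m) (b (m + 1)))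
    (hchar : ∀ m, m < g →
      ({i : ℕ | γ.coeff ((i : ℚ) / n) ≠ 0 ∧ ¬ l m ∣ i}.Nonempty ∧
       b (m + 1) = sInf {i : ℕ | γ.coeff ((i : ℚ) / n) ≠ 0 ∧ ¬ l m ∣ i}))
    (k : ℕ) (hk : k < g) :
    (∑ j ∈ (Finset.range n).filter (fun j =>
        ∃ q : ℚ, q < (b (k + 1) : ℚ) / n ∧ (twist n (ω ^ j) γ).coeff q ≠ γ.coeff q),
      (twist n (ω ^ j) γ - γ).order)
      = ∑ i ∈ Finset.Icc 1 k, ((l (i - 1) : ℚ) - (l i : ℚ)) * ((b i : ℚ) / n) := by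
  have hsupp : γ.support ⊆ Set.range fun i : ℕ ↦ (i : ℚ) / n := fun q hq ↦
    let ⟨i, _, hi⟩ := hγsupp hq
    ⟨i, hi.symm⟩
  have hP : IsPuiseuxCharacteristic n g γ b l := ⟨hl0, hl, hchar⟩
  rw [hP.filter_exists_lt_twist_pow_coeff_ne hsupp hn hω hk,
    hP.sum_order_twist_pow_sub_filter_not_dvd hsupp hn hω hk,
    ← Ico_add_one_right_eq_Icc, sum_Ico_eq_sum_range]
  simp only [add_comm 1, Nat.add_sub_cancel, Nat.succ_sub_one]

/-- Let `f` be an irreducible Weierstrass polynomial of degree `n = b₀` with Puiseux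
characteristic `(b₀,...,b_g)`, `γ` a fixed Newton–Puiseux root of `f` (the other roots
being the twists of `γ` by powers of a primitive `n`-th root of unity `ω`), and `k < g`.
Then the sum `α₃` of the contact orders `O(γ_i, γ)` over all roots `γ_i` with
`O(γ_i, γ) < b_{k+1}/b₀` equals
`(n - l₁)(b₁/b₀) + (l₁ - l₂)(b₂/b₀) + ⋯ + (l_{k-1} - l_k)(b_k/b₀)`. -/
theorem sum_contact_orders (n g : ℕ) (hn : 0 < n) (hg : 1 ≤ g)
    (f : Polynomial (PowerSeries ℂ)) (hmonic : f.Monic) (hdeg : f.natDegree = n)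
    (hW : ∀ j, j < n → PowerSeries.constantCoeff (R := ℂ) (f.coeff j) = 0)
    (hirr : Irreducible f)
    (γ : HahnSeries ℚ ℂ)
    (hγsupp : γ.support ⊆ {q : ℚ | ∃ i : ℕ, 1 ≤ i ∧ q = (i : ℚ) / n})
    (hγ : Polynomial.eval₂ (HahnSeries.ofPowerSeries ℚ ℂ) γ f = 0)
    (ω : ℂ) (hω : IsPrimitiveRoot ω n)
    (b l : ℕ → ℕ)
    (hb0 : b 0 = n) (hl0 : l 0 = n)
    (hl : ∀ m, m < g → l (m + 1) = Nat.gcd (l m) (b (m + 1)))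
    (hlg : l g = 1)
    (hchar : ∀ m, m < g →
      ({i : ℕ | γ.coeff ((i : ℚ) / n) ≠ 0 ∧ ¬ l m ∣ i}.Nonempty ∧
       b (m + 1) = sInf {i : ℕ | γ.coeff ((i : ℚ) / n) ≠ 0 ∧ ¬ l m ∣ i}))
    (k : ℕ) (hk : k < g) :
    (∑ j ∈ (Finset.range n).filter (fun j =>
        ∃ q : ℚ, q < (b (k + 1) : ℚ) / n ∧ (twist n (ω ^ j) γ).coeff q ≠ γ.coeff q),
      (twist n (ω ^ j) γ - γ).order)
      = ∑ i ∈ Finset.Icc 1 k, ((l (i - 1) : ℚ) - (l i : ℚ)) * ((b i : ℚ) / n) :=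
  sum_contact_orders_general n g hn γ hγsupp ω hω b l hl0 hl hchar k hk

end
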